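/- arXiv:1109.1990 — 2 statements merged into one kernel-verified Lean document; each statement's English description precedes it below -/
import Mathlib

section
/- If the columns of X ∈ R^{n×p} are pairwise orthogonal, then ‖X·Diag(w)‖_* = Σ_{i=1}^p ‖X^{(i)}‖_2 |w_i|, i.e., the trace Lasso equals the weighted ℓ1-norm with weights given by the column norms of X. -/
noncomputable def traceNorm {n p : ℕ} (M : Matrix (Fin n) (Fin p) ℝ) : ℝ :=
  ((Matrix.posSemidef_conjTranspose_mul_self M).1.cfc Real.sqrt).trace

/-!
With `D = diagonal w`, the Gram matrix `(X D)ᵀ (X D) = D (Xᵀ X) D` is diagonal with entries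
`‖X⁽ⁱ⁾‖² wᵢ²`, because orthogonal columns make `Xᵀ X` diagonal. The square root of a nonnegative
diagonal matrix is its entrywise square root, so `trace √((X D)ᵀ (X D)) = ∑ ‖X⁽ⁱ⁾‖ |wᵢ|`.
-/

open Matrix

namespace Matrix

theorem transpose_mul_self_eq_diagonal_of_orthogonal_columns {m n R : Type*} [Fintype m]
    [DecidableEq n] [Semiring R] (X : Matrix m n R)
    (horth : ∀ i j, i ≠ j → ∑ l, X l i * X l j = 0) :
    Xᵀ * X = diagonal fun i => ∑ l, X l i ^ 2 := by
  ext i j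
  rw [mul_apply]
  obtain rfl | hij := eq_or_ne i j
  · simp [sq]
  · simp [hij, horth i j hij]

theorem transpose_mul_diagonal_mul_self_mul_diagonal {m n R : Type*} [Fintype m] [Fintype n]
    [DecidableEq n] [CommSemiring R] (X : Matrix m n R) (w : n → R) :
    (X * diagonal w)ᵀ * (X * diagonal w) = diagonal w * (Xᵀ * X) * diagonal w := by
  simp only [transpose_mul, diagonal_transpose, Matrix.mul_assoc]

open scoped MatrixOrder in
theorem cfc_sqrt_diagonal {n : Type*} [Fintype n] [DecidableEq n] {d : n → ℝ} (hd : 0 ≤ d) :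
    cfc Real.sqrt (diagonal d) = diagonal fun i => √(d i) := by
  have hpsd : (diagonal d).PosSemidef := posSemidef_diagonal_iff.mpr hd
  have hsqrt : (diagonal fun i => √(d i)).PosSemidef :=
    posSemidef_diagonal_iff.mpr fun i => Real.sqrt_nonneg _
  rw [← cfcₙ_eq_cfc, ← CFC.sqrt_eq_real_sqrt _ hpsd.nonneg]
  refine CFC.sqrt_unique ?_ hsqrt.nonneg
  rw [diagonal_mul_diagonal]
  exact congrArg diagonal (funext fun i => Real.mul_self_sqrt (hd i))

end Matrix

theorem traceNorm_eq_sum_sqrt_of_conjTranspose_mul_self_eq_diagonal {n p : ℕ}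
    {M : Matrix (Fin n) (Fin p) ℝ} {d : Fin p → ℝ} (h : Mᴴ * M = diagonal d) :
    traceNorm M = ∑ i, √(d i) := by
  have hd : 0 ≤ d := posSemidef_diagonal_iff.mp (h ▸ posSemidef_conjTranspose_mul_self M)
  rw [traceNorm, ← IsHermitian.cfc_eq, h, cfc_sqrt_diagonal hd, trace_diagonal]

theorem trace_lasso_orthogonal_columns {n p : ℕ} (X : Matrix (Fin n) (Fin p) ℝ)
    (horth : ∀ i j : Fin p, i ≠ j → ∑ l, X l i * X l j = 0) (w : Fin p → ℝ) :
    traceNorm (X * Matrix.diagonal w) =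
      ∑ i, Real.sqrt (∑ l, X l i ^ 2) * |w i| := by
  have hgram : (X * diagonal w)ᴴ * (X * diagonal w) =
      diagonal fun i => (∑ l, X l i ^ 2) * w i ^ 2 := by
    rw [conjTranspose_eq_transpose_of_trivial, transpose_mul_diagonal_mul_self_mul_diagonal,
      transpose_mul_self_eq_diagonal_of_orthogonal_columns X horth, diagonal_mul_diagonal,
      diagonal_mul_diagonal]
    congr 1; ext i; ring
  rw [traceNorm_eq_sum_sqrt_of_conjTranspose_mul_self_eq_diagonal hgram]
  refine Finset.sum_congr rfl fun i _ => ?_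
  rw [Real.sqrt_mul (Finset.sum_nonneg fun l _ => sq_nonneg _), Real.sqrt_sq_eq_abs]
end

section
/- The function (w, S) ↦ (1/2)‖y − Xw‖_2² + (λ/2)·wᵀ·Diag(diag(Xᵀ S^{-1} X))·w + (λ/2)·tr(S), defined for w ∈ R^p and S symmetric positive definite, is jointly convex in (w, S) for λ ≥ 0. -/
/-!
The least-squares and trace terms are convex (a sum of squares of affine maps and a linear map).
Writing `m = wᵢ • Xᵀ i`, the middle term is `(λ/2) ∑ᵢ m ⬝ᵥ S⁻¹ *ᵥ m`, a sum of matrix-fractional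
functions precomposed with linear maps. The matrix-fractional function `(m, S) ↦ m ⬝ᵥ S⁻¹ *ᵥ m`
is the pointwise supremum over `z` of the functions `2 z ⬝ᵥ m - z ⬝ᵥ S *ᵥ z`, which are affine in
`(m, S)`, the supremum being attained at `z = S⁻¹ *ᵥ m`; hence it is jointly convex.
-/

open Matrix Finset Set

theorem ConvexOn.finsetSum {𝕜 E β ι : Type*} [Semiring 𝕜] [PartialOrder 𝕜] [AddCommMonoid E]
    [AddCommMonoid β] [PartialOrder β] [IsOrderedAddMonoid β] [SMul 𝕜 E] [Module 𝕜 β]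
    {s : Set E} (hs : Convex 𝕜 s) (t : Finset ι) {f : ι → E → β}
    (hf : ∀ i ∈ t, ConvexOn 𝕜 s (f i)) : ConvexOn 𝕜 s fun x => ∑ i ∈ t, f i x := by
  classical
  induction t using Finset.induction_on with
  | empty => simpa using convexOn_const (0 : β) hs
  | insert a t ha ih =>
    simp only [Finset.sum_insert ha]
    exact (hf a (mem_insert_self a t)).add (ih fun i hi => hf i (mem_insert_of_mem hi))

namespace Matrix

theorem convex_setOf_posDef {ι : Type*} : Convex ℝ {S : Matrix ι ι ℝ | S.PosDef} := by
  intro A hA B hB a b ha hb hab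
  rcases ha.eq_or_lt with rfl | ha
  · simp_all
  · exact (hA.smul ha).add_posSemidef (hB.posSemidef.smul hb)

theorem convex_setOf_snd_posDef {ι E : Type*} [AddCommMonoid E] [Module ℝ E] :
    Convex ℝ {q : E × Matrix ι ι ℝ | q.2.PosDef} :=
  convex_setOf_posDef.linear_preimage (LinearMap.snd ℝ E _)

theorem transpose_mul_mul_apply_self {ι κ : Type*} [Fintype ι] (A : Matrix ι κ ℝ)
    (M : Matrix ι ι ℝ) (j : κ) : (Aᵀ * M * A) j j = Aᵀ j ⬝ᵥ M *ᵥ Aᵀ j := by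
  simp only [mul_apply, dotProduct, mulVec, transpose_apply, Finset.sum_mul, Finset.mul_sum]
  rw [Finset.sum_comm]
  exact Finset.sum_congr rfl fun _ _ => Finset.sum_congr rfl fun _ _ => by ring

variable {ι : Type*} [Fintype ι]

theorem IsSymm.mulVec_dotProduct_comm {S : Matrix ι ι ℝ} (hS : S.IsSymm) (u v : ι → ℝ) :
    S *ᵥ u ⬝ᵥ v = u ⬝ᵥ S *ᵥ v := by
  rw [dotProduct_comm, dotProduct_mulVec, ← mulVec_transpose, hS.eq, dotProduct_comm]

variable [DecidableEq ι]

theorem PosDef.two_mul_dotProduct_sub_le {S : Matrix ι ι ℝ} (hS : S.PosDef) (m z : ι → ℝ) :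
    2 * (z ⬝ᵥ m) - z ⬝ᵥ S *ᵥ z ≤ m ⬝ᵥ S⁻¹ *ᵥ m := by
  have hdet : IsUnit S.det := hS.isUnit.map detMonoidHom
  -- the gap is `(m - S z) ⬝ᵥ S⁻¹ (m - S z) ≥ 0`
  have hsq := hS.inv.posSemidef.dotProduct_mulVec_nonneg (m - S *ᵥ z)
  simp only [star_trivial, mulVec_sub, mulVec_mulVec, nonsing_inv_mul S hdet, one_mulVec,
    dotProduct_sub, sub_dotProduct,
    (isHermitian_iff_isSymm.mp hS.isHermitian).mulVec_dotProduct_comm,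
    mul_nonsing_inv S hdet] at hsq
  linarith [dotProduct_comm m z]

theorem PosDef.two_mul_dotProduct_sub_inv_mulVec {S : Matrix ι ι ℝ} (hS : S.PosDef)
    (m : ι → ℝ) : 2 * (S⁻¹ *ᵥ m ⬝ᵥ m) - S⁻¹ *ᵥ m ⬝ᵥ S *ᵥ S⁻¹ *ᵥ m = m ⬝ᵥ S⁻¹ *ᵥ m := by
  rw [mulVec_mulVec, mul_nonsing_inv S (hS.isUnit.map detMonoidHom), one_mulVec,
    dotProduct_comm (S⁻¹ *ᵥ m) m]
  ring

theorem convexOn_dotProduct_inv_mulVec :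
    ConvexOn ℝ {q : (ι → ℝ) × Matrix ι ι ℝ | q.2.PosDef} fun q => q.1 ⬝ᵥ q.2⁻¹ *ᵥ q.1 := by
  refine ⟨convex_setOf_snd_posDef, ?_⟩
  rintro ⟨m₁, S₁⟩ (h₁ : S₁.PosDef) ⟨m₂, S₂⟩ (h₂ : S₂.PosDef) a b ha hb hab
  have h : (a • S₁ + b • S₂).PosDef := convex_setOf_posDef h₁ h₂ ha hb hab
  set z := (a • S₁ + b • S₂)⁻¹ *ᵥ (a • m₁ + b • m₂)
  simp only [Prod.smul_mk, Prod.mk_add_mk, smul_eq_mul]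
  calc (a • m₁ + b • m₂) ⬝ᵥ (a • S₁ + b • S₂)⁻¹ *ᵥ (a • m₁ + b • m₂)
      = 2 * (z ⬝ᵥ (a • m₁ + b • m₂)) - z ⬝ᵥ (a • S₁ + b • S₂) *ᵥ z :=
        (h.two_mul_dotProduct_sub_inv_mulVec _).symm
    _ = a * (2 * (z ⬝ᵥ m₁) - z ⬝ᵥ S₁ *ᵥ z) + b * (2 * (z ⬝ᵥ m₂) - z ⬝ᵥ S₂ *ᵥ z) := by
        simp only [add_mulVec, smul_mulVec, dotProduct_add, dotProduct_smul, smul_eq_mul]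
        ring
    _ ≤ a * (m₁ ⬝ᵥ S₁⁻¹ *ᵥ m₁) + b * (m₂ ⬝ᵥ S₂⁻¹ *ᵥ m₂) := by
        gcongr
        exacts [h₁.two_mul_dotProduct_sub_le _ _, h₂.two_mul_dotProduct_sub_le _ _]

theorem convexOn_sum_transpose_mul_inv_mul_apply_self_mul_sq {κ : Type*} [Fintype κ]
    (A : Matrix ι κ ℝ) :
    ConvexOn ℝ {q : (κ → ℝ) × Matrix ι ι ℝ | q.2.PosDef}
      fun q => ∑ j, (Aᵀ * q.2⁻¹ * A) j j * q.1 j ^ 2 := by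
  refine ConvexOn.finsetSum convex_setOf_snd_posDef _ fun j _ => ?_
  refine (convexOn_dotProduct_inv_mulVec.comp_linearMap
    (((LinearMap.proj (R := ℝ) (φ := fun _ : κ => ℝ) j).smulRight (Aᵀ j)).prodMap
      LinearMap.id)).congr fun q _ => ?_
  simp only [Function.comp_apply, LinearMap.prodMap_apply, LinearMap.coe_smulRight,
    LinearMap.coe_proj, Function.eval, LinearMap.id_coe, id_eq, mulVec_smul, dotProduct_smul,
    smul_dotProduct, smul_eq_mul, transpose_mul_mul_apply_self]
  ring

end Matrix

theorem convexOn_sum_sq_sub_mulVec {ι κ : Type*} [Fintype ι] [Fintype κ] (A : Matrix ι κ ℝ)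
    (y : ι → ℝ) : ConvexOn ℝ univ fun w => ∑ i, (y i - (A *ᵥ w) i) ^ 2 :=
  ConvexOn.finsetSum convex_univ _ fun i _ =>
    even_two.convexOn_pow.comp_affineMap
      (AffineMap.const ℝ _ (y i) - ((LinearMap.proj i).comp A.mulVecLin).toAffineMap)

theorem reweighted_objective_jointly_convex {n p : ℕ} (X : Matrix (Fin n) (Fin p) ℝ)
    (y : Fin n → ℝ) (lam : ℝ) (hlam : 0 ≤ lam) :
    ConvexOn ℝ
      {q : (Fin p → ℝ) × Matrix (Fin n) (Fin n) ℝ | q.2.PosDef}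
      (fun q =>
        (1/2) * ∑ i, (y i - X.mulVec q.1 i) ^ 2 +
        (lam/2) * ∑ i, (X.transpose * q.2⁻¹ * X) i i * q.1 i ^ 2 +
        (lam/2) * q.2.trace) := by
  have hs := convex_setOf_snd_posDef (E := Fin p → ℝ) (ι := Fin n)
  have hfit := ((convexOn_sum_sq_sub_mulVec X y).comp_linearMap
    (LinearMap.fst ℝ _ (Matrix (Fin n) (Fin n) ℝ))).subset (subset_univ _) hs
  have hpenalty := convexOn_sum_transpose_mul_inv_mul_apply_self_mul_sq X
  have htrace := (traceLinearMap (Fin n) ℝ ℝ ∘ₗ LinearMap.snd ℝ (Fin p → ℝ) _).convexOn hs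
  have hlam' : 0 ≤ lam / 2 := by positivity
  exact ((hfit.smul (by norm_num)).add (hpenalty.smul hlam')).add (htrace.smul hlam')
end
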